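/- With the flag f for the inner formula G_{[0,T_in]}φ, for every integer t ≥ 1: f(t) = T_in + 1 if and only if t ≥ T_in + 1 and φ(s(t')) holds for every integer t' with t − T_in − 1 ≤ t' ≤ t − 1. In other words, the flag attains its maximal value T_in + 1 at time t exactly when φ held at all of the previous T_in + 1 time steps. -/
import Mathlib


/-- Flag for the inner formula G_{[0,T_in]}φ: f(0) = 0, f(t+1) = min(f(t), T_in) + 1
if φ(s(t)), and f(t+1) = 0 otherwise. -/
def flagG {S : Type*} (s : ℕ → S) (φ : S → Prop) [DecidablePred φ] (Tin : ℕ) : ℕ → ℕ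
  | 0 => 0
  | (t + 1) => if φ (s t) then min (flagG s φ Tin t) Tin + 1 else 0

lemma flagG_le {S : Type*} (s : ℕ → S) (φ : S → Prop) [DecidablePred φ] (Tin : ℕ) :
    ∀ t, flagG s φ Tin t ≤ Tin + 1 := by
  intro t
  cases t with
  | zero => simp [flagG]
  | succ t =>
    simp only [flagG]
    split <;> omega

lemma flagG_ge_iff {S : Type*} (s : ℕ → S) (φ : S → Prop) [DecidablePred φ] (Tin : ℕ) :
    ∀ t k : ℕ, 1 ≤ k → k ≤ Tin + 1 →
      (k ≤ flagG s φ Tin t ↔ k ≤ t ∧ ∀ t' : ℕ, t - k ≤ t' → t' ≤ t - 1 → φ (s t')) := by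
  intro t
  induction t with
  | zero =>
    intro k hk _
    simp only [flagG]
    constructor
    · omega
    · rintro ⟨h, -⟩; omega
  | succ t ih =>
    intro k hk hk2
    simp only [flagG]
    by_cases hφ : φ (s t)
    · simp only [hφ, if_pos]
      rcases Nat.lt_or_ge k 2 with h1 | h2
      · -- k = 1
        have hk1 : k = 1 := by omega
        subst hk1
        constructor
        · intro _
          refine ⟨by omega, fun t' h1 h2 => ?_⟩
          have : t' = t := by omega
          rw [this]; exact hφ
        · intro _; omega
      · -- k ≥ 2
        have hiff := ih (k - 1) (by omega) (by omega)
        constructor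
        · intro h
          have h' : k - 1 ≤ flagG s φ Tin t := by omega
          obtain ⟨h1, h2'⟩ := hiff.mp h'
          refine ⟨by omega, fun t' ha hb => ?_⟩
          rcases Nat.lt_or_ge t' t with hlt | hge
          · exact h2' t' (by omega) (by omega)
          · have : t' = t := by omega
            rw [this]; exact hφ
        · rintro ⟨h1, h2'⟩
          have : k - 1 ≤ flagG s φ Tin t := by
            apply hiff.mpr
            refine ⟨by omega, fun t' ha hb => h2' t' (by omega) (by omega)⟩
          omega
    · simp only [hφ, if_neg, not_false_iff]
      constructor
      · omega
      · rintro ⟨h1, h2⟩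
        exfalso
        exact hφ (h2 t (by omega) (by omega))

theorem stmt15 {S : Type*} (s : ℕ → S) (φ : S → Prop) [DecidablePred φ] (Tin : ℕ) :
    ∀ t : ℕ, 1 ≤ t →
      (flagG s φ Tin t = Tin + 1 ↔
        Tin + 1 ≤ t ∧ ∀ t' : ℕ, t - Tin - 1 ≤ t' → t' ≤ t - 1 → φ (s t')) := by
  intro t _
  have hle := flagG_le s φ Tin t
  have h := flagG_ge_iff s φ Tin t (Tin + 1) (by omega) le_rfl
  constructor
  · intro he
    obtain ⟨h1, h2⟩ := h.mp (by omega)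
    exact ⟨h1, fun t' ha hb => h2 t' (by omega) hb⟩
  · rintro ⟨h1, h2⟩
    have := h.mpr ⟨h1, fun t' ha hb => h2 t' (by omega) hb⟩
    omega
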